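/- Let a,b ∈ ℤ. In the fraction field of ℤ[x,y], set s = x/y² and t = y/x². Then the element x^a·y^b lies in the subring ℤ[s,t] (i.e., there exists a polynomial p ∈ ℤ[s,t] with x^a·y^b = p(s,t)) if and only if a ≡ b (mod 3), a + 2b ≤ 0, and 2a + b ≤ 0; moreover, in that case x^a·y^b = s^{−(a+2b)/3}·t^{−(2a+b)/3}. -/
import Mathlib


open MvPolynomial

set_option synthInstance.maxHeartbeats 1000000
set_option maxHeartbeats 1000000

noncomputable section

abbrev Rxy : Type := MvPolynomial (Fin 2) ℤ

/-- The fraction field of ℤ[x,y]. -/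
abbrev Kxy : Type := FractionRing Rxy

/-- The image of `x` in the fraction field. -/
noncomputable def xx : Kxy := algebraMap Rxy Kxy (X 0)

/-- The image of `y` in the fraction field. -/
noncomputable def yy : Kxy := algebraMap Rxy Kxy (X 1)

/-- `s = x / y²`. -/
noncomputable def sv : Kxy := xx / yy ^ 2

/-- `t = y / x²`. -/
noncomputable def tv : Kxy := yy / xx ^ 2

/-- Evaluation of a two-variable integer polynomial at `(s, t)` in the fraction field. -/
noncomputable def evST (p : Rxy) : Kxy := aeval ![sv, tv] p


lemma alg_inj : Function.Injective (algebraMap Rxy Kxy) := IsFractionRing.injective Rxy Kxy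

lemma hxne : xx ≠ 0 := by
  rw [xx, map_ne_zero_iff _ alg_inj]; exact X_ne_zero 0

lemma hyne : yy ≠ 0 := by
  rw [yy, map_ne_zero_iff _ alg_inj]; exact X_ne_zero 1

lemma key (m n : ℕ) : sv ^ m * tv ^ n = xx ^ ((m:ℤ) - 2*n) * yy ^ ((n:ℤ) - 2*m) := by
  have h1 : sv = xx ^ (1:ℤ) * yy ^ (-2:ℤ) := by
    rw [sv, zpow_one, show ((-2):ℤ) = -((2:ℕ):ℤ) by norm_num, zpow_neg, zpow_natCast,
      div_eq_mul_inv]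
  have h2 : tv = xx ^ (-2:ℤ) * yy ^ (1:ℤ) := by
    rw [tv, zpow_one, show ((-2):ℤ) = -((2:ℕ):ℤ) by norm_num, zpow_neg, zpow_natCast,
      div_eq_mul_inv, mul_comm]
  rw [h1, h2, mul_pow, mul_pow,
    ← zpow_natCast (xx ^ (1:ℤ)) m, ← zpow_natCast (yy ^ (-2:ℤ)) m,
    ← zpow_natCast (xx ^ (-2:ℤ)) n, ← zpow_natCast (yy ^ (1:ℤ)) n,
    ← zpow_mul, ← zpow_mul, ← zpow_mul, ← zpow_mul,
    mul_mul_mul_comm, ← zpow_add₀ hxne, ← zpow_add₀ hyne]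
  congr 1 <;> ring

lemma hmono (e : Fin 2 →₀ ℕ) (c : ℤ) :
    algebraMap Rxy Kxy (monomial e c) = (c : Kxy) * (xx ^ (e 0) * yy ^ (e 1)) := by
  have h : (monomial e c : Rxy) = C c * (X 0 ^ e 0 * X 1 ^ e 1) := by
    rw [monomial_eq, Finsupp.prod_fintype _ _ (fun i => pow_zero _), Fin.prod_univ_two]
  rw [h, map_mul, map_mul, map_pow, map_pow, ← xx, ← yy]
  congr 1
  simp [algebraMap_int_eq, map_intCast]

lemma hev (d : Fin 2 →₀ ℕ) (c : ℤ) :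
    evST (monomial d c) = (c : Kxy) * (sv ^ d 0 * tv ^ d 1) := by
  rw [evST, aeval_monomial, Finsupp.prod_fintype _ _ (fun i => pow_zero _), Fin.prod_univ_two]
  simp [algebraMap_int_eq, map_intCast]

lemma back (a b : ℤ) (h1 : a ≡ b [ZMOD 3]) (h2 : a + 2 * b ≤ 0) (h3 : 2 * a + b ≤ 0) :
    xx ^ a * yy ^ b = sv ^ ((-(a + 2 * b)) / 3).toNat * tv ^ ((-(2 * a + b)) / 3).toNat := by
  have hd : (3:ℤ) ∣ b - a := h1.dvd
  set M : ℕ := ((-(a + 2 * b)) / 3).toNat with hM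
  set n : ℕ := ((-(2 * a + b)) / 3).toNat with hn
  have hMa : (M:ℤ) = -(a + 2*b)/3 := by omega
  have hna : (n:ℤ) = -(2*a+b)/3 := by omega
  have e1 : (M:ℤ) - 2*n = a := by omega
  have e2 : (n:ℤ) - 2*M = b := by omega
  rw [key, e1, e2]

lemma dle {p : Rxy} {d : Fin 2 →₀ ℕ} (hd : d ∈ p.support) (i : Fin 2) :
    d i ≤ p.totalDegree := by
  refine le_trans ?_ (degreeOf_le_totalDegree p i)
  rw [degreeOf_eq_sup]
  exact Finset.le_sup (f := fun m => m i) hd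

lemma termeq (N : ℕ) (c : ℤ) (m n : ℕ) (hm : m ≤ N) (hn : n ≤ N) :
    (c:Kxy) * (xx ^ (2*N + m - 2*n) * yy ^ (2*N + n - 2*m))
      = (xx*yy)^(2*N) * ((c:Kxy) * (sv ^ m * tv ^ n)) := by
  rw [key, mul_pow, ← zpow_natCast xx (2*N + m - 2*n), ← zpow_natCast yy (2*N + n - 2*m),
    ← zpow_natCast xx (2*N), ← zpow_natCast yy (2*N)]
  have c1 : ((2*N + m - 2*n : ℕ) : ℤ) = 2*(N:ℤ) + ((m:ℤ) - 2*n) := by omega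
  have c2 : ((2*N + n - 2*m : ℕ) : ℤ) = 2*(N:ℤ) + ((n:ℤ) - 2*m) := by omega
  have c3 : ((2*N : ℕ) : ℤ) = 2*(N:ℤ) := by omega
  rw [c1, c2, c3, zpow_add₀ hxne, zpow_add₀ hyne]
  ring

theorem stmt_1 (a b : ℤ) :
    ((∃ p : Rxy, evST p = xx ^ a * yy ^ b) ↔
      ((a ≡ b [ZMOD 3]) ∧ a + 2 * b ≤ 0 ∧ 2 * a + b ≤ 0)) ∧
    (((a ≡ b [ZMOD 3]) ∧ a + 2 * b ≤ 0 ∧ 2 * a + b ≤ 0) →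
      xx ^ a * yy ^ b = sv ^ ((-(a + 2 * b)) / 3).toNat * tv ^ ((-(2 * a + b)) / 3).toNat) := by
  constructor
  · constructor
    · rintro ⟨p, hp⟩
      set N : ℕ := p.totalDegree + a.natAbs + b.natAbs with hN
      set e : (Fin 2 →₀ ℕ) → (Fin 2 →₀ ℕ) := fun d =>
        Finsupp.single 0 (2*N + d 0 - 2*d 1) + Finsupp.single 1 (2*N + d 1 - 2*d 0) with he
      set t' : Fin 2 →₀ ℕ :=
        Finsupp.single 0 (a + 2*N).toNat + Finsupp.single 1 (b + 2*N).toNat with ht'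
      set q : Rxy := ∑ d ∈ p.support, monomial (e d) (coeff d p) with hq
      have hsum : evST p = ∑ d ∈ p.support, evST (monomial d (coeff d p)) := by
        unfold evST
        conv_lhs => rw [p.as_sum]
        exact map_sum _ _ _
      have hAq : algebraMap Rxy Kxy q = (xx*yy)^(2*N) * evST p := by
        rw [hq, map_sum, hsum, Finset.mul_sum]
        refine Finset.sum_congr rfl (fun d hd => ?_)
        rw [hmono, hev]
        have h0 : e d 0 = 2*N + d 0 - 2*d 1 := by
          simp [he, Finsupp.single_apply]
        have h1 : e d 1 = 2*N + d 1 - 2*d 0 := by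
          simp [he, Finsupp.single_apply]
        rw [h0, h1]
        exact termeq N _ (d 0) (d 1) (by have := dle hd 0; omega) (by have := dle hd 1; omega)
      have hAr : algebraMap Rxy Kxy (monomial t' 1) = (xx*yy)^(2*N) * (xx ^ a * yy ^ b) := by
        rw [hmono]
        have h0 : t' 0 = (a + 2*N).toNat := by simp [ht', Finsupp.single_apply]
        have h1 : t' 1 = (b + 2*N).toNat := by simp [ht', Finsupp.single_apply]
        rw [h0, h1, mul_pow, ← zpow_natCast xx ((a + 2*N).toNat),
          ← zpow_natCast yy ((b + 2*N).toNat), ← zpow_natCast xx (2*N),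
          ← zpow_natCast yy (2*N)]
        have c1 : (((a + 2*N).toNat : ℕ) : ℤ) = a + 2*(N:ℤ) := by omega
        have c2 : (((b + 2*N).toNat : ℕ) : ℤ) = b + 2*(N:ℤ) := by omega
        have c3 : ((2*N : ℕ) : ℤ) = 2*(N:ℤ) := by omega
        rw [c1, c2, c3, show a + 2*(N:ℤ) = 2*(N:ℤ) + a by ring,
          show b + 2*(N:ℤ) = 2*(N:ℤ) + b by ring, zpow_add₀ hxne, zpow_add₀ hyne]
        push_cast
        ring
      have hqr : q = monomial t' 1 := alg_inj (by rw [hAq, hAr, hp])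
      have hco : coeff t' q = 1 := by rw [hqr, coeff_monomial, if_pos rfl]
      have hex : ∃ d ∈ p.support, e d = t' := by
        by_contra hc
        push_neg at hc
        rw [hq, coeff_sum] at hco
        rw [Finset.sum_eq_zero (fun d hd => by
          rw [coeff_monomial, if_neg (hc d hd)])] at hco
        exact one_ne_zero hco.symm
      obtain ⟨d, hd, hed⟩ := hex
      have h0 : e d 0 = t' 0 := by rw [hed]
      have h1 : e d 1 = t' 1 := by rw [hed]
      simp only [he, ht', Finsupp.add_apply, Finsupp.single_apply] at h0 h1
      norm_num at h0 h1
      have hd0 := dle hd 0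
      have hd1 := dle hd 1
      refine ⟨show a % 3 = b % 3 by omega, by omega, by omega⟩
    · rintro ⟨h1, h2, h3⟩
      refine ⟨X 0 ^ ((-(a + 2 * b)) / 3).toNat * X 1 ^ ((-(2 * a + b)) / 3).toNat, ?_⟩
      rw [back a b h1 h2 h3]
      unfold evST
      simp
  · rintro ⟨h1, h2, h3⟩
    exact back a b h1 h2 h3
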